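/- Let G = ⟨N, E, L, root⟩ be an egraph and P ⊆ N × N a set of node pairs such that ρ_root = {(n,n') | root(n) = root(n')} is the smallest equivalence relation on N that contains P and is closed under congruence. Then for all nodes n, n' with root(n) = root(n'), the conjunction ⋀_{(p,q) ∈ P} term(p) ≐ term(q) entails term(n) ≐ term(n') in first-order logic with equality (free variables treated as fresh constants): every Σ-structure in which term(p) and term(q) evaluate equally for all (p,q) ∈ P also evaluates term(n) and term(n') equally. (This is the soundness of the egraph congruence closure used in constructing the egraph of a formula.) -/

import Mathlib

inductive Term (Sym Var : Type) : Type where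
  | var : Var → Term Sym Var
  | app : Sym → List (Term Sym Var) → Term Sym Var

namespace Term

inductive HasVar {Sym Var : Type} (v : Var) : Term Sym Var → Prop where
  | var : HasVar v (Term.var v)
  | app {f : Sym} {args : List (Term Sym Var)} {t : Term Sym Var} :
      t ∈ args → HasVar v t → HasVar v (Term.app f args)

/-- A term is ground if it contains no variables. -/
def Ground {Sym Var : Type} (t : Term Sym Var) : Prop := ∀ v : Var, ¬ HasVar v t

/-- `ImmSub s t` : `s` is an immediate subterm of `t`. -/
def ImmSub {Sym Var : Type} (s t : Term Sym Var) : Prop :=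
  ∃ (f : Sym) (args : List (Term Sym Var)), t = Term.app f args ∧ s ∈ args

/-- Evaluation of a term in a Σ-structure with domain `D`, interpretation `I` of
function symbols, and valuation `ρ` of the variables (treated as fresh constants). -/
def eval {Sym Var D : Type} (I : Sym → List D → D) (ρ : Var → D) : Term Sym Var → D
  | .var v => ρ v
  | .app f args => I f (args.attach.map fun t => eval I ρ t.1)
  termination_by t => sizeOf t
  decreasing_by
    have := List.sizeOf_lt_of_mem t.2
    simp only [Term.app.sizeOf_spec]
    omega

/-- Height of a term: leaves have height 1; a non-leaf has height one more than the
maximum height of its immediate subterms. -/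
def height {Sym Var : Type} : Term Sym Var → ℕ
  | .var _ => 1
  | .app _ args => 1 + (args.attach.map fun t => height t.1).foldr max 0
  termination_by t => sizeOf t
  decreasing_by
    have := List.sizeOf_lt_of_mem t.2
    simp only [Term.app.sizeOf_spec]
    omega

end Term

/-- An egraph over a functional signature `Sym` with variables `Var`. -/
structure EGraph (Sym Var : Type) where
  N : Type
  finN : Finite N
  children : N → List N
  label : N → Sym ⊕ Var
  root : N → N
  /-- `⟨N, E⟩` is a DAG. -/
  dag : ∀ n : N, ¬ Relation.TransGen (fun a b : N => a ∈ children b) n n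
  /-- only leaves may be labeled by variables. -/
  varLeaf : ∀ (n : N) (v : Var), label n = Sum.inr v → children n = []
  /-- `ρ_root` is closed under congruence. -/
  congrClosed : ∀ n n' : N, label n = label n' → children n ≠ [] →
    List.Forall₂ (fun a b => root a = root b) (children n) (children n') →
    root n = root n'

theorem wf_of_acyclic {α : Type} [Finite α] {r : α → α → Prop}
    (h : ∀ a, ¬ Relation.TransGen r a a) : WellFounded r := by
  have htg : WellFounded (Relation.TransGen r) := by
    haveI : IsIrrefl α (Relation.TransGen r) := ⟨h⟩
    haveI : IsTrans α (Relation.TransGen r) :=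
      ⟨fun _ _ _ hab hbc => Relation.TransGen.trans hab hbc⟩
    exact Finite.wellFounded_of_trans_of_irrefl _
  exact Subrelation.wf (fun {a b} hab => Relation.TransGen.single hab) htg

namespace EGraph

variable {Sym Var : Type}

/-- The term of a node. -/
noncomputable def term (G : EGraph Sym Var) : G.N → Term Sym Var :=
  haveI := G.finN
  (wf_of_acyclic G.dag).fix fun n rec =>
    match G.label n with
    | Sum.inr v => Term.var v
    | Sum.inl f => Term.app f ((G.children n).attach.map fun c => rec c.1 c.2)

/-- The edge relation of the graph `G_rep`: `repEdge G rep n m` iff `m = rep c`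
for some child `c` of `n`. -/
def repEdge (G : EGraph Sym Var) (rep : G.N → G.N) (n m : G.N) : Prop :=
  ∃ c ∈ G.children n, m = rep c

/-- An admissible representative function: (a) one representative per class,
(b) `ρ_rep = ρ_root`, (c) `G_rep` is acyclic. -/
structure Admissible (G : EGraph Sym Var) (rep : G.N → G.N) : Prop where
  rep_mem : ∀ n, G.root (rep n) = G.root n
  rep_class : ∀ n n', G.root n = G.root n' ↔ rep n = rep n'
  acyclic : ∀ n, ¬ Relation.TransGen (G.repEdge rep) n n

/-- Extraction of the term of a node relative to an admissible representative
function, by well-founded recursion on `G_rep`. -/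
noncomputable def toexpr (G : EGraph Sym Var) (rep : G.N → G.N)
    (h : G.Admissible rep) : G.N → Term Sym Var :=
  haveI := G.finN
  (wf_of_acyclic (r := Function.swap (G.repEdge rep))
      (fun a hta => h.acyclic a hta.swap)).fix
    fun n rec =>
      match G.label n with
      | Sum.inr v => Term.var v
      | Sum.inl f =>
          Term.app f ((G.children n).attach.map fun c => rec (rep c.1) ⟨c.1, c.2, rfl⟩)

/-- Satisfaction of `toformula(rep, S)` in a Σ-structure: all its equality literals
`toexpr(rep n) ≐ toexpr(n)` (for `n ∉ S` not a representative) hold. -/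
def SatFormula {D : Type} (G : EGraph Sym Var) (rep : G.N → G.N) (h : G.Admissible rep)
    (S : Set G.N) (I : Sym → List D → D) (ρ : Var → D) : Prop :=
  ∀ n, n ≠ rep n → n ∉ S →
    Term.eval I ρ (G.toexpr rep h (rep n)) = Term.eval I ρ (G.toexpr rep h n)

/-- The variable `v` occurs in the formula `toformula(rep, S)`. -/
def OccursIn (G : EGraph Sym Var) (rep : G.N → G.N) (h : G.Admissible rep)
    (S : Set G.N) (v : Var) : Prop :=
  ∃ n, n ≠ rep n ∧ n ∉ S ∧
    ((G.toexpr rep h (rep n)).HasVar v ∨ (G.toexpr rep h n).HasVar v)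

/-- Constructively ground nodes. -/
inductive CGround (G : EGraph Sym Var) : G.N → Prop where
  | ground {n : G.N} : (G.term n).Ground → CGround G n
  | app {n : G.N} (w : (c : G.N) → c ∈ G.children n → G.N) :
      G.children n ≠ [] →
      (∀ c hc, G.root (w c hc) = G.root c) →
      (∀ c hc, CGround G (w c hc)) →
      CGround G n

/-- A class is ground if it contains a c-ground node. -/
def GroundClass (G : EGraph Sym Var) (n : G.N) : Prop :=
  ∃ m, G.root m = G.root n ∧ G.CGround m

/-- A representative function is maximally ground if representatives of ground
classes are c-ground. -/
def MaxGround (G : EGraph Sym Var) (rep : G.N → G.N) : Prop :=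
  ∀ n, G.GroundClass n → G.CGround (rep n)

/-- Edge relation of the graph `⟨N, E_r⟩` for a partial representative function. -/
def pEdge (G : EGraph Sym Var) (r : G.N → Option G.N) (n m : G.N) : Prop :=
  ∃ c ∈ G.children n, r c = some m

/-- Admissible partial representative functions. -/
structure PAdmissible (G : EGraph Sym Var) (r : G.N → Option G.N) : Prop where
  classCond : ∀ n : G.N, r n ≠ none → ∀ m : G.N, (G.root m = G.root n ↔ r m = r n)
  acyclic : ∀ n, ¬ Relation.TransGen (G.pEdge r) n n
  defined_children : ∀ n m : G.N, r m = some n → ∀ c ∈ G.children n, r c ≠ none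

/-- Class frontiers of a node. -/
inductive CFrontier (G : EGraph Sym Var) (n : G.N) : Set G.N → Prop where
  | base : CFrontier G n {c | c ∈ G.children n}
  | classSwap {Fr : Set G.N} {m c : G.N} : CFrontier G n Fr → m ∈ Fr →
      G.root c = G.root m → CFrontier G n ((Fr ∪ {c}) \ {m})
  | expand {Fr : Set G.N} {m : G.N} : CFrontier G n Fr → m ∈ Fr →
      G.children m ≠ [] → CFrontier G n ((Fr ∪ {c | c ∈ G.children m}) \ {m})

end EGraph


theorem term_unfold {Sym Var : Type} (G : EGraph Sym Var) (n : G.N) :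
    G.term n = match G.label n with
      | Sum.inr v => Term.var v
      | Sum.inl f => Term.app f ((G.children n).attach.map fun c => G.term c.1) := by
  haveI := G.finN
  exact WellFounded.fix_eq _ _ n

theorem eval_app {Sym Var D : Type} (I : Sym → List D → D) (ρ : Var → D)
    (f : Sym) (args : List (Term Sym Var)) :
    Term.eval I ρ (Term.app f args) = I f (args.map (Term.eval I ρ)) := by
  rw [Term.eval]
  congr 1
  rw [List.map_attach_eq_pmap]
  simp

/-- soundness of congruence closure. If `ρ_root` is the smallest
equivalence relation on the nodes that contains `P` and is closed under congruence,
then the conjunction of the equalities `term p ≐ term q` for `(p, q) ∈ P` entails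
`term n ≐ term n'` for all root-equal nodes `n, n'`, in every Σ-structure. -/
theorem congruence_closure_sound {Sym Var : Type} (G : EGraph Sym Var)
    (P : Set (G.N × G.N))
    (hP : ∀ p ∈ P, G.root p.1 = G.root p.2)
    (hmin : ∀ Q : G.N → G.N → Prop, Equivalence Q →
      (∀ p ∈ P, Q p.1 p.2) →
      (∀ n n' : G.N, G.label n = G.label n' → G.children n ≠ [] →
        List.Forall₂ Q (G.children n) (G.children n') → Q n n') →
      ∀ n n' : G.N, G.root n = G.root n' → Q n n') :
    ∀ (D : Type) (I : Sym → List D → D) (ρ : Var → D),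
      (∀ p ∈ P, Term.eval I ρ (G.term p.1) = Term.eval I ρ (G.term p.2)) →
      ∀ n n' : G.N, G.root n = G.root n' →
        Term.eval I ρ (G.term n) = Term.eval I ρ (G.term n') := by
  intro D I ρ hPeq n n' hroot
  refine hmin (fun a b => Term.eval I ρ (G.term a) = Term.eval I ρ (G.term b))
    ⟨fun _ => rfl, Eq.symm, Eq.trans⟩ hPeq ?_ n n' hroot
  intro a b hlab hne hF
  rw [term_unfold G a, term_unfold G b]
  cases hl : G.label a with
  | inr v => exact absurd (G.varLeaf a v hl) hne
  | inl f =>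
    rw [hl] at hlab
    rw [← hlab]
    simp only [eval_app]
    congr 1
    rw [List.map_attach_eq_pmap, List.map_attach_eq_pmap]
    have : ∀ (l l' : List G.N),
        List.Forall₂ (fun a b => Term.eval I ρ (G.term a) = Term.eval I ρ (G.term b)) l l' →
        (l.map G.term).map (Term.eval I ρ) = (l'.map G.term).map (Term.eval I ρ) := by
      intro l l' h
      induction h with
      | nil => rfl
      | cons h _ ih => simp only [List.map_map] at ih ⊢; simpa using ⟨h, ih⟩
    simpa using this _ _ hF
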